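/- Nonexistence of party-permutation-invariant tetrahedral bases for even n: let n ≥ 2 be even. Then there is no unit vector ψ ∈ (ℂ²)^{⊗n} that is invariant under all permutations of the n tensor factors and whose orbit {U_g ψ : g ∈ {0,1}ⁿ} under G_tetra^{(n)} is an orthonormal family. -/
import Mathlib


open Matrix Complex Finset

/-- Pauli X. -/
noncomputable def X2 : Matrix (Fin 2) (Fin 2) ℂ := !![0, 1; 1, 0]

/-- Pauli Y. -/
noncomputable def Y2 : Matrix (Fin 2) (Fin 2) ℂ := !![0, -Complex.I; Complex.I, 0]

/-- Pauli Z. -/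
noncomputable def Z2 : Matrix (Fin 2) (Fin 2) ℂ := !![1, 0; 0, -1]

/-- Tensor product of single-qubit operators, as a matrix on (ℂ²)^{⊗n}. -/
noncomputable def tensorOp2 {n : ℕ} (A : Fin n → Matrix (Fin 2) (Fin 2) ℂ) :
    Matrix (Fin n → Fin 2) (Fin n → Fin 2) ℂ :=
  Matrix.of fun v w => ∏ i, A i (v i) (w i)

/-- Single-site operator A acting on qubit i (identity elsewhere). -/
noncomputable def single2 {n : ℕ} (i : Fin n) (A : Matrix (Fin 2) (Fin 2) ℂ) :
    Matrix (Fin n → Fin 2) (Fin n → Fin 2) ℂ :=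
  tensorOp2 fun j => if j = i then A else 1

/-- The inner product ⟨f, g⟩ = Σ conj(f v) g v (antilinear in the first argument). -/
noncomputable def dotc {ι : Type*} [Fintype ι] (f g : ι → ℂ) : ℂ :=
  ∑ v, (starRingEnd ℂ) (f v) * g v

/-- The unitaries U_g of G_tetra^{(n)}, g = (z₁,…,z_{n−1},x) ∈ {0,1}ⁿ:
U_g = (Z^{(1)}Z^{(2)})^{z₁}···(Z^{(n−1)}Z^{(n)})^{z_{n−1}}·(X⊗⋯⊗X)^x. -/
noncomputable def Ug2 (n : ℕ) [NeZero n] (g : Fin n → Fin 2) :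
    Matrix (Fin n → Fin 2) (Fin n → Fin 2) ℂ :=
  (((List.finRange (n - 1)).map fun i =>
      (single2 (⟨i.val, by have := i.isLt; omega⟩ : Fin n) Z2 *
          single2 (⟨i.val + 1, by have := i.isLt; omega⟩ : Fin n) Z2)
        ^ (g ⟨i.val, by have := i.isLt; omega⟩).val).prod) *
    (tensorOp2 fun _ : Fin n => X2)
      ^ (g ⟨n - 1, by have := Nat.pos_of_ne_zero (NeZero.ne n); omega⟩).val

/-! ### Auxiliary lemmas -/

lemma fin2_cases (a : Fin 2) : a = 0 ∨ a = 1 := by omega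

lemma Z2_apply (a b : Fin 2) : Z2 a b = if a = b then (if a = 0 then 1 else -1) else 0 := by
  fin_cases a <;> fin_cases b <;> simp [Z2]

lemma X2_apply (a b : Fin 2) : X2 a b = if b = a + 1 then 1 else 0 := by
  fin_cases a <;> fin_cases b <;> simp [X2]

lemma single2_Z2 {n : ℕ} (i : Fin n) :
    single2 i Z2 = Matrix.diagonal (fun v => if v i = 0 then 1 else (-1 : ℂ)) := by
  ext v w
  simp only [single2, tensorOp2, Matrix.of_apply, Matrix.diagonal_apply]
  by_cases h : v = w
  · subst h
    rw [if_pos rfl]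
    rw [Finset.prod_eq_single i]
    · simp [Z2_apply]
    · intro j _ hj
      simp [hj]
    · simp
  · rw [if_neg h]
    obtain ⟨j, hj⟩ : ∃ j, v j ≠ w j := by
      by_contra hc; push_neg at hc; exact h (funext hc)
    apply Finset.prod_eq_zero (Finset.mem_univ j)
    by_cases hji : j = i
    · subst hji; simp [Z2_apply, hj]
    · simp [hji, Matrix.one_apply, hj]

lemma Xall_mulVec {n : ℕ} (ψ : (Fin n → Fin 2) → ℂ) :
    tensorOp2 (fun _ : Fin n => X2) *ᵥ ψ = fun v => ψ (fun j => v j + 1) := by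
  funext v
  simp only [Matrix.mulVec, dotProduct, tensorOp2, Matrix.of_apply]
  have key : ∀ w : Fin n → Fin 2,
      (∏ i, X2 (v i) (w i)) = if (fun j => v j + 1) = w then 1 else 0 := by
    intro w
    simp only [X2_apply]
    rw [Finset.prod_boole]
    congr 1
    simp only [eq_iff_iff, funext_iff]
    constructor
    · intro h j; exact (h j (Finset.mem_univ j)).symm
    · intro h j _; exact (h j).symm
  simp only [key, ite_mul, one_mul, zero_mul]
  rw [Finset.sum_ite_eq (Finset.univ) (fun j => v j + 1) ψ]
  simp

/-- the single-edge sign of a basis vector. -/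
noncomputable def sg {n : ℕ} (v : Fin n → Fin 2) (i : Fin (n - 1)) : ℂ :=
  (if v ⟨i.val, by have := i.isLt; omega⟩ = 0 then 1 else -1) *
  (if v ⟨i.val + 1, by have := i.isLt; omega⟩ = 0 then 1 else -1)

lemma sg_eq {n : ℕ} (v : Fin n → Fin 2) (i : Fin (n - 1)) :
    sg v i = if v ⟨i.val + 1, by have := i.isLt; omega⟩ =
        v ⟨i.val, by have := i.isLt; omega⟩ + 1 then -1 else 1 := by
  unfold sg
  rcases fin2_cases (v ⟨i.val, by have := i.isLt; omega⟩) with h | h <;>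
    rcases fin2_cases (v ⟨i.val + 1, by have := i.isLt; omega⟩) with h' | h' <;>
    rw [h, h'] <;> simp

lemma listProd_diagonal {ι V : Type*} [Fintype V] [DecidableEq V]
    (l : List ι) (d : ι → V → ℂ) :
    (l.map fun i => Matrix.diagonal (d i)).prod =
      Matrix.diagonal fun v => (l.map fun i => d i v).prod := by
  induction l with
  | nil => simp
  | cons a t ih =>
      simp only [List.map_cons, List.prod_cons, ih, Matrix.diagonal_mul_diagonal]

lemma Ug2_mulVec (n : ℕ) [NeZero n] (g : Fin n → Fin 2) (ψ : (Fin n → Fin 2) → ℂ) :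
    Ug2 n g *ᵥ ψ = fun v =>
      (∏ i : Fin (n - 1), (sg v i) ^ (g ⟨i.val, by have := i.isLt; omega⟩).val) *
        ψ (fun j => v j + g ⟨n - 1, by have := Nat.pos_of_ne_zero (NeZero.ne n); omega⟩) := by
  have hlist : (((List.finRange (n - 1)).map fun i =>
      (single2 (⟨i.val, by have := i.isLt; omega⟩ : Fin n) Z2 *
          single2 (⟨i.val + 1, by have := i.isLt; omega⟩ : Fin n) Z2)
        ^ (g ⟨i.val, by have := i.isLt; omega⟩).val).prod) =
      Matrix.diagonal (fun v => ∏ i : Fin (n - 1),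
        (sg v i) ^ (g ⟨i.val, by have := i.isLt; omega⟩).val) := by
    have hmap : ∀ i : Fin (n - 1),
        (single2 (⟨i.val, by have := i.isLt; omega⟩ : Fin n) Z2 *
          single2 (⟨i.val + 1, by have := i.isLt; omega⟩ : Fin n) Z2)
        ^ (g ⟨i.val, by have := i.isLt; omega⟩).val =
        Matrix.diagonal (fun v => (sg v i) ^ (g ⟨i.val, by have := i.isLt; omega⟩).val) := by
      intro i
      rw [single2_Z2, single2_Z2, Matrix.diagonal_mul_diagonal, Matrix.diagonal_pow]
      rfl
    rw [List.map_congr_left (fun i _ => hmap i), listProd_diagonal]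
    exact congrArg Matrix.diagonal (funext fun v => (Fin.prod_univ_def _).symm)
  rw [Ug2, hlist]
  rcases (by omega : g ⟨n - 1, by have := Nat.pos_of_ne_zero (NeZero.ne n); omega⟩ = 0 ∨
      g ⟨n - 1, by have := Nat.pos_of_ne_zero (NeZero.ne n); omega⟩ = 1) with hx | hx <;>
    rw [hx] <;> funext v
  · simp only [Fin.val_zero, pow_zero, mul_one, Matrix.mulVec_diagonal]
    rw [show (fun j => v j + (0 : Fin 2)) = v from funext fun j => add_zero _]
  · simp only [Fin.val_one, pow_one, ← Matrix.mulVec_mulVec, Xall_mulVec,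
      Matrix.mulVec_diagonal]

/-!
STATEMENT 13: For even n ≥ 2, no unit vector ψ ∈ (ℂ²)^{⊗n} is invariant under all
permutations of the tensor factors and has an orthonormal orbit {U_g ψ : g ∈ {0,1}ⁿ}
under G_tetra^{(n)}.
-/
set_option maxHeartbeats 2000000 in
theorem stmt13 (n : ℕ) [NeZero n] (hn : 2 ≤ n) (heven : Even n) :
    ¬ ∃ ψ : (Fin n → Fin 2) → ℂ,
        dotc ψ ψ = 1 ∧
        (∀ (σ : Equiv.Perm (Fin n)) (w : Fin n → Fin 2), ψ (w ∘ σ) = ψ w) ∧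
        (∀ g h : Fin n → Fin 2,
          dotc (Ug2 n g *ᵥ ψ) (Ug2 n h *ᵥ ψ) = if g = h then 1 else 0) := by
  obtain ⟨t, ht⟩ := heven
  rintro ⟨ψ, -, h2, h3⟩
  set w0 : Fin n → Fin 2 := fun j => if j.val % 2 = 0 then 0 else 1 with hw0
  set w1 : Fin n → Fin 2 := fun j => w0 j + 1 with hw1
  -- basic facts about w0 and w1
  have hne : w0 ≠ w1 := by
    intro h
    have := congrFun h ⟨0, by omega⟩
    simp [hw0, hw1] at this
  have hw0succ : ∀ (k : ℕ) (hk : k + 1 < n), w0 ⟨k + 1, hk⟩ = w0 ⟨k, by omega⟩ + 1 := by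
    intro k hk
    simp only [hw0]
    by_cases hp : k % 2 = 0
    · have h1 : (k + 1) % 2 = 1 := by omega
      simp [hp, h1]
    · have h1 : (k + 1) % 2 = 0 := by omega
      simp [hp, h1]
  have hsg0 : ∀ i : Fin (n - 1), sg w0 i = -1 := by
    intro i
    rw [sg_eq, if_pos (hw0succ i.val (by have := i.isLt; omega))]
  -- ψ takes the same value at w0 and w1, by permutation invariance
  have hsym : ψ w1 = ψ w0 := by
    have hcomp : w0 ∘ (Equiv.addRight (1 : Fin n)) = w1 := by
      funext j
      simp only [Function.comp_apply, Equiv.coe_addRight, hw0, hw1]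
      have hval : ((j + 1 : Fin n)).val = (j.val + 1) % n := by
        rw [Fin.val_add, Fin.val_one', Nat.mod_eq_of_lt (show (1:ℕ) < n by omega)]
      have hlt := j.isLt
      by_cases hj : j.val + 1 = n
      · have hm : (j.val + 1) % n = 0 := by rw [hj, Nat.mod_self]
        have h3 : ¬ (j.val % 2 = 0) := by omega
        rw [hval, hm]
        simp [h3]
      · have hm : (j.val + 1) % n = j.val + 1 := Nat.mod_eq_of_lt (by omega)
        rw [hval, hm]
        by_cases hp : j.val % 2 = 0
        · have h1 : (j.val + 1) % 2 = 1 := by omega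
          simp [hp, h1]
        · have h1 : (j.val + 1) % 2 = 0 := by omega
          simp [hp, h1]
    rw [← hcomp]
    exact h2 (Equiv.addRight 1) w0
  -- characterization of the alternating strings
  have step : ∀ v : Fin n → Fin 2,
      (∀ i : Fin (n - 1), v ⟨i.val + 1, by have := i.isLt; omega⟩ =
        v ⟨i.val, by have := i.isLt; omega⟩ + 1) →
      ∀ (k : ℕ) (hk : k < n), v ⟨k, hk⟩ = v ⟨0, by omega⟩ + w0 ⟨k, hk⟩ := by
    intro v hv k
    induction k with
    | zero =>
        intro hk
        have hz : w0 ⟨0, hk⟩ = 0 := by simp [hw0]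
        rw [hz, add_zero]
    | succ k ih =>
        intro hk
        have hk1 : k < n - 1 := by omega
        have hstep := hv ⟨k, hk1⟩
        rw [hstep, ih (by omega), hw0succ k hk, ← add_assoc]
  have hchar : ∀ v : Fin n → Fin 2,
      (∀ i : Fin (n - 1), v ⟨i.val + 1, by have := i.isLt; omega⟩ =
        v ⟨i.val, by have := i.isLt; omega⟩ + 1) ↔ (v = w0 ∨ v = w1) := by
    intro v
    constructor
    · intro hv
      rcases fin2_cases (v ⟨0, by omega⟩) with h0 | h0
      · left
        funext j
        have := step v hv j.val j.isLt
        rw [Fin.eta] at this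
        rw [this, h0, zero_add]
      · right
        funext j
        have := step v hv j.val j.isLt
        rw [Fin.eta] at this
        rw [this, h0, hw1]
        have : ∀ a : Fin 2, 1 + a = a + 1 := by decide
        exact this _
    · rintro (rfl | rfl) i
      · exact hw0succ i.val (by have := i.isLt; omega)
      · simp only [hw1]
        rw [hw0succ i.val (by have := i.isLt; omega)]
  -- the orthogonality conditions, in explicit form
  have key : ∀ (z : Fin (n - 1) → Fin 2) (x : Fin 2),
      (∑ v : Fin n → Fin 2, (starRingEnd ℂ) (ψ v) *
        ((∏ i : Fin (n - 1), sg v i ^ (z i).val) * ψ (fun j => v j + x)))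
      = if z = 0 ∧ x = 0 then 1 else 0 := by
    intro z x
    set G : Fin n → Fin 2 := fun j => if h : j.val < n - 1 then z ⟨j.val, h⟩ else x with hG
    have hGi : ∀ i : Fin (n - 1), G ⟨i.val, by have := i.isLt; omega⟩ = z i := by
      intro i
      simp only [hG]
      rw [dif_pos i.isLt]
    have hGl : G ⟨n - 1, by have := Nat.pos_of_ne_zero (NeZero.ne n); omega⟩ = x := by
      simp only [hG]
      rw [dif_neg (lt_irrefl _)]
    have hG0 : ((0 : Fin n → Fin 2) = G) ↔ (z = 0 ∧ x = 0) := by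
      constructor
      · intro h
        constructor
        · funext i
          have := (congrFun h.symm ⟨i.val, by have := i.isLt; omega⟩)
          rw [hGi i] at this
          exact this
        · have := (congrFun h.symm ⟨n - 1, by have := Nat.pos_of_ne_zero (NeZero.ne n); omega⟩)
          rw [hGl] at this
          exact this
      · rintro ⟨hz, hx⟩
        funext j
        simp only [hG]
        split
        · rw [hz]; rfl
        · rw [hx]; rfl
    have horth := h3 0 G
    rw [Ug2_mulVec, Ug2_mulVec] at horth
    simp only [dotc, Pi.zero_apply, Fin.val_zero, pow_zero, Finset.prod_const_one, one_mul,
      add_zero, hGi, hGl] at horth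
    rw [horth, if_congr hG0 rfl rfl]
  -- sum the conditions against the signs of w0
  have key2 : ∀ x : Fin 2,
      (2 : ℂ) ^ (n - 1) *
        ((starRingEnd ℂ) (ψ w0) * ψ (fun j => w0 j + x) +
         (starRingEnd ℂ) (ψ w1) * ψ (fun j => w1 j + x)) = if x = 0 then 1 else 0 := by
    intro x
    have hz : ∀ v : Fin n → Fin 2,
        (∑ z : Fin (n - 1) → Fin 2, ∏ i : Fin (n - 1), (sg w0 i * sg v i) ^ (z i).val)
        = if v = w0 ∨ v = w1 then (2 : ℂ) ^ (n - 1) else 0 := by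
      intro v
      rw [← Fintype.prod_sum (fun (i : Fin (n - 1)) (b : Fin 2) => (sg w0 i * sg v i) ^ b.val)]
      have hfac : ∀ i : Fin (n - 1),
          (∑ b : Fin 2, (sg w0 i * sg v i) ^ b.val) =
          if v ⟨i.val + 1, by have := i.isLt; omega⟩ =
            v ⟨i.val, by have := i.isLt; omega⟩ + 1 then 2 else 0 := by
        intro i
        rw [Fin.sum_univ_two, hsg0 i, sg_eq]
        split <;> norm_num
      rw [Finset.prod_congr rfl fun i _ => hfac i]
      have hsplit : ∀ i : Fin (n - 1),
          (if v ⟨i.val + 1, by have := i.isLt; omega⟩ =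
            v ⟨i.val, by have := i.isLt; omega⟩ + 1 then (2 : ℂ) else 0) =
          2 * (if v ⟨i.val + 1, by have := i.isLt; omega⟩ =
            v ⟨i.val, by have := i.isLt; omega⟩ + 1 then 1 else 0) := by
        intro i
        split <;> norm_num
      rw [Finset.prod_congr rfl fun i _ => hsplit i, Finset.prod_mul_distrib,
        Finset.prod_const, Finset.prod_boole]
      have hcard : (Finset.univ : Finset (Fin (n - 1))).card = n - 1 := by
        simp
      rw [hcard]
      have hiff : (∀ i : Fin (n - 1), i ∈ Finset.univ →
          v ⟨i.val + 1, by have := i.isLt; omega⟩ =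
            v ⟨i.val, by have := i.isLt; omega⟩ + 1) ↔ (v = w0 ∨ v = w1) := by
        rw [← hchar v]
        exact ⟨fun h i => h i (Finset.mem_univ i), fun h i _ => h i⟩
      simp only [hiff]
      split <;> norm_num
    have hsum : (∑ z : Fin (n - 1) → Fin 2, (∏ i : Fin (n - 1), sg w0 i ^ (z i).val) *
        (∑ v : Fin n → Fin 2, (starRingEnd ℂ) (ψ v) *
          ((∏ i : Fin (n - 1), sg v i ^ (z i).val) * ψ (fun j => v j + x))))
        = ∑ v : Fin n → Fin 2,
            (if v = w0 ∨ v = w1 then (2 : ℂ) ^ (n - 1) else 0) *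
              ((starRingEnd ℂ) (ψ v) * ψ (fun j => v j + x)) := by
      simp only [Finset.mul_sum]
      rw [Finset.sum_comm]
      refine Finset.sum_congr rfl fun v _ => ?_
      rw [← hz v, Finset.sum_mul]
      refine Finset.sum_congr rfl fun z _ => ?_
      simp only [mul_pow, Finset.prod_mul_distrib]
      ring
    have hsum2 : (∑ z : Fin (n - 1) → Fin 2, (∏ i : Fin (n - 1), sg w0 i ^ (z i).val) *
        (∑ v : Fin n → Fin 2, (starRingEnd ℂ) (ψ v) *
          ((∏ i : Fin (n - 1), sg v i ^ (z i).val) * ψ (fun j => v j + x))))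
        = ∑ z : Fin (n - 1) → Fin 2, (∏ i : Fin (n - 1), sg w0 i ^ (z i).val) *
            (if z = 0 ∧ x = 0 then 1 else 0) := by
      refine Finset.sum_congr rfl fun z _ => ?_
      rw [key z x]
    have hrhs : (∑ z : Fin (n - 1) → Fin 2, (∏ i : Fin (n - 1), sg w0 i ^ (z i).val) *
        (if z = 0 ∧ x = 0 then 1 else 0)) = if x = 0 then 1 else 0 := by
      rcases fin2_cases x with hx | hx
      · subst hx
        simp only [and_true]
        have : ∀ z : Fin (n - 1) → Fin 2, (∏ i : Fin (n - 1), sg w0 i ^ (z i).val) *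
            (if z = 0 then (1 : ℂ) else 0) = if z = (0 : Fin (n - 1) → Fin 2) then
              (∏ i : Fin (n - 1), sg w0 i ^ (z i).val) else 0 := by
          intro z
          split <;> simp
        rw [Finset.sum_congr rfl fun z _ => this z, Finset.sum_ite_eq' Finset.univ 0]
        simp
      · subst hx
        have hx0 : ¬ ((1 : Fin 2) = 0) := by decide
        simp [hx0]
    -- put it together
    have hpair : (∑ v : Fin n → Fin 2,
        (if v = w0 ∨ v = w1 then (2 : ℂ) ^ (n - 1) else 0) *
          ((starRingEnd ℂ) (ψ v) * ψ (fun j => v j + x)))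
        = (2 : ℂ) ^ (n - 1) *
          ((starRingEnd ℂ) (ψ w0) * ψ (fun j => w0 j + x) +
           (starRingEnd ℂ) (ψ w1) * ψ (fun j => w1 j + x)) := by
      have hmem : ∀ v : Fin n → Fin 2, (v = w0 ∨ v = w1) ↔
          v ∈ ({w0, w1} : Finset (Fin n → Fin 2)) := by
        intro v
        simp [Finset.mem_insert, Finset.mem_singleton]
      rw [Finset.sum_congr rfl fun v _ => by rw [if_congr (hmem v) rfl rfl, ite_mul, zero_mul]]
      rw [Finset.sum_ite_mem, Finset.univ_inter, Finset.sum_pair hne]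
      ring
    rw [← hpair, ← hsum, hsum2, hrhs]
  -- conclude
  have e0 := key2 0
  have e1 := key2 1
  rw [if_pos rfl] at e0
  rw [if_neg (by decide : ¬ ((1 : Fin 2) = 0))] at e1
  have hv0 : ∀ v : Fin n → Fin 2, (fun j => v j + (0 : Fin 2)) = v :=
    fun v => funext fun j => add_zero _
  have hplus : (fun j => w1 j + (1 : Fin 2)) = w0 := by
    funext j
    simp only [hw1]
    have : ∀ a : Fin 2, a + 1 + 1 = a := by decide
    exact this _
  have hplus0 : (fun j => w0 j + (1 : Fin 2)) = w1 := by
    funext j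
    simp only [hw1]
  rw [hv0 w0, hv0 w1, hsym] at e0
  rw [hplus, hplus0, hsym] at e1
  rw [e1] at e0
  exact one_ne_zero e0.symm
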